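/- Zero curvature (Lax) formulation of the Z₂-Sine-Gordon equation. Let u₀, u₁ : ℝ×ℝ → ℝ be smooth and let λ be a nonzero complex number. Define the 2×2 blocks Q = −(1/2)·[[∂_x u₀, 0], [∂_x u₁, ∂_x u₀]], C = [[cos u₀, 0], [−u₁ sin u₀, cos u₀]], S = [[sin u₀, 0], [u₁ cos u₀, sin u₀]], and the 4×4 complex matrix functions M = [[−iλ·I₂, Q], [−Q, iλ·I₂]] and N = (i/(4λ)) · [[C, S], [S, −C]]. Then the zero curvature equation ∂_t M − ∂_x N + MN − NM = 0 holds at a point if and only if the Z₂-Sine-Gordon equations ∂_t∂_x u₀ = sin u₀ and ∂_t∂_x u₁ = u₁ cos u₀ hold at that point. -/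

import Mathlib

/-- The block `Q = −(1/2)·[[∂_x u₀, 0],[∂_x u₁, ∂_x u₀]]`. -/
noncomputable def Qblock (u₀ u₁ : ℝ → ℝ → ℝ) (x t : ℝ) : Matrix (Fin 2) (Fin 2) ℂ :=
  -((1 : ℂ) / 2) •
    !![((deriv (fun x' => u₀ x' t) x : ℝ) : ℂ), 0;
       ((deriv (fun x' => u₁ x' t) x : ℝ) : ℂ), ((deriv (fun x' => u₀ x' t) x : ℝ) : ℂ)]

/-- The block `C = [[cos u₀, 0],[−u₁ sin u₀, cos u₀]]`. -/
noncomputable def Cblock (u₀ u₁ : ℝ → ℝ → ℝ) (x t : ℝ) : Matrix (Fin 2) (Fin 2) ℂ :=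
  !![((Real.cos (u₀ x t) : ℝ) : ℂ), 0;
     ((-(u₁ x t * Real.sin (u₀ x t)) : ℝ) : ℂ), ((Real.cos (u₀ x t) : ℝ) : ℂ)]

/-- The block `S = [[sin u₀, 0],[u₁ cos u₀, sin u₀]]`. -/
noncomputable def Sblock (u₀ u₁ : ℝ → ℝ → ℝ) (x t : ℝ) : Matrix (Fin 2) (Fin 2) ℂ :=
  !![((Real.sin (u₀ x t) : ℝ) : ℂ), 0;
     ((u₁ x t * Real.cos (u₀ x t) : ℝ) : ℂ), ((Real.sin (u₀ x t) : ℝ) : ℂ)]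

/-!
The blocks are 2×2 matrices representing dual numbers `a + b ε` (`ε² = 0`): with
`U = u₀ + u₁ ε` one has `C = cos U`, `S = sin U` and `Q = -½ ∂ₓU`. Dual numbers commute and
obey the usual chain rule for `cos` and `sin`, so the computation is verbatim the one for the
classical sine-Gordon Lax pair: `∂ₓN` cancels the diagonal of `[M, N]`, and what remains are the
off-diagonal blocks `∓½ (∂ₜ∂ₓU - sin U)`, whose vanishing is the `Z₂`-sine-Gordon system.
-/

open Matrix Real

section EntrywiseDeriv

variable {𝕜 𝕜' : Type*} [NontriviallyNormedField 𝕜] [NontriviallyNormedField 𝕜']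
  [NormedAlgebra 𝕜 𝕜'] {m n o p : Type*}

noncomputable def entrywiseDeriv (F : 𝕜 → Matrix m n 𝕜') (s : 𝕜) : Matrix m n 𝕜' :=
  Matrix.of fun i j => deriv (fun s' => F s' i j) s

theorem entrywiseDeriv_const (A : Matrix m n 𝕜') (s : 𝕜) :
    entrywiseDeriv (fun _ => A) s = 0 := by
  ext i j
  simp [entrywiseDeriv]

theorem entrywiseDeriv_neg (F : 𝕜 → Matrix m n 𝕜') (s : 𝕜) :
    entrywiseDeriv (fun s' => -F s') s = -entrywiseDeriv F s := by
  ext i j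
  exact deriv.fun_neg

theorem entrywiseDeriv_const_smul (c : 𝕜') (F : 𝕜 → Matrix m n 𝕜') (s : 𝕜) :
    entrywiseDeriv (fun s' => c • F s') s = c • entrywiseDeriv F s := by
  ext i j
  exact deriv_const_mul_field c

theorem entrywiseDeriv_fromBlocks (A : 𝕜 → Matrix n m 𝕜') (B : 𝕜 → Matrix n o 𝕜')
    (C : 𝕜 → Matrix p m 𝕜') (D : 𝕜 → Matrix p o 𝕜') (s : 𝕜) :
    entrywiseDeriv (fun s' => fromBlocks (A s') (B s') (C s') (D s')) s
      = fromBlocks (entrywiseDeriv A s) (entrywiseDeriv B s)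
          (entrywiseDeriv C s) (entrywiseDeriv D s) := by
  ext (i | i) (j | j) <;> rfl

end EntrywiseDeriv

theorem deriv_ofReal_comp (f : ℝ → ℝ) (s : ℝ) :
    deriv (fun s' => (f s' : ℂ)) s = deriv f s := by
  by_cases hf : DifferentiableAt ℝ f s
  · exact hf.hasDerivAt.ofReal_comp.deriv
  · have hf' : ¬DifferentiableAt ℝ (fun s' => (f s' : ℂ)) s := fun h =>
      hf (by simpa [Function.comp_def] using Complex.reCLM.differentiableAt.comp s h)
    rw [deriv_zero_of_not_differentiableAt hf, deriv_zero_of_not_differentiableAt hf',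
      Complex.ofReal_zero]

/-- `dualMat a b` represents the dual number `a + b ε` (`ε² = 0`). -/
def dualMat (a b : ℝ) : Matrix (Fin 2) (Fin 2) ℂ :=
  !![(a : ℂ), 0; (b : ℂ), (a : ℂ)]

theorem dualMat_mul (a b c d : ℝ) :
    dualMat a b * dualMat c d = dualMat (a * c) (a * d + b * c) := by
  ext i j
  fin_cases i <;> fin_cases j <;> simp [dualMat, Matrix.mul_apply, add_comm]

theorem dualMat_commute (a b c d : ℝ) : Commute (dualMat a b) (dualMat c d) := by
  rw [Commute, SemiconjBy, dualMat_mul, dualMat_mul]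
  congr 1 <;> ring

theorem dualMat_neg (a b : ℝ) : -dualMat a b = dualMat (-a) (-b) := by
  ext i j
  fin_cases i <;> fin_cases j <;> simp [dualMat]

theorem dualMat_sub (a b c d : ℝ) : dualMat a b - dualMat c d = dualMat (a - c) (b - d) := by
  ext i j
  fin_cases i <;> fin_cases j <;> simp [dualMat]

theorem dualMat_eq_zero_iff (a b : ℝ) : dualMat a b = 0 ↔ a = 0 ∧ b = 0 := by
  constructor
  · intro h
    have h₀ := congrFun (congrFun h 0) 0
    have h₁ := congrFun (congrFun h 1) 0
    simp_all [dualMat]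
  · rintro ⟨rfl, rfl⟩
    ext i j
    fin_cases i <;> fin_cases j <;> simp [dualMat]

theorem entrywiseDeriv_dualMat (a b : ℝ → ℝ) (s : ℝ) :
    entrywiseDeriv (fun s' => dualMat (a s') (b s')) s = dualMat (deriv a s) (deriv b s) := by
  ext i j
  fin_cases i <;> fin_cases j <;> simp [entrywiseDeriv, dualMat, deriv_ofReal_comp]

/-- `cos (a + b ε)`. -/
noncomputable def dualCos (a b : ℝ) : Matrix (Fin 2) (Fin 2) ℂ := dualMat (cos a) (-(b * sin a))

/-- `sin (a + b ε)`. -/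
noncomputable def dualSin (a b : ℝ) : Matrix (Fin 2) (Fin 2) ℂ := dualMat (sin a) (b * cos a)

section DualTrig

variable {a b : ℝ → ℝ} {s : ℝ}

theorem entrywiseDeriv_dualCos (ha : DifferentiableAt ℝ a s) (hb : DifferentiableAt ℝ b s) :
    entrywiseDeriv (fun s' => dualCos (a s') (b s')) s
      = -(dualSin (a s) (b s) * dualMat (deriv a s) (deriv b s)) := by
  unfold dualCos dualSin
  rw [entrywiseDeriv_dualMat, dualMat_mul, dualMat_neg,
    ha.hasDerivAt.cos.deriv, (hb.hasDerivAt.fun_mul ha.hasDerivAt.sin).fun_neg.deriv]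
  congr 1 <;> ring

theorem entrywiseDeriv_dualSin (ha : DifferentiableAt ℝ a s) (hb : DifferentiableAt ℝ b s) :
    entrywiseDeriv (fun s' => dualSin (a s') (b s')) s
      = dualCos (a s) (b s) * dualMat (deriv a s) (deriv b s) := by
  unfold dualCos dualSin
  rw [entrywiseDeriv_dualMat, dualMat_mul,
    ha.hasDerivAt.sin.deriv, (hb.hasDerivAt.fun_mul ha.hasDerivAt.cos).deriv]
  congr 1
  ring

end DualTrig

theorem DifferentiableAt.slice_fst {𝕜 E F G : Type*} [NontriviallyNormedField 𝕜]
    [NormedAddCommGroup E] [NormedSpace 𝕜 E] [NormedAddCommGroup F] [NormedSpace 𝕜 F]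
    [NormedAddCommGroup G] [NormedSpace 𝕜 G] {u : E → F → G} {x : E} {t : F}
    (hu : DifferentiableAt 𝕜 (fun p : E × F => u p.1 p.2) (x, t)) :
    DifferentiableAt 𝕜 (fun x' => u x' t) x :=
  hu.comp (f := fun x' => (x', t)) x (differentiableAt_id.prodMk (differentiableAt_const t))

theorem Qblock_eq (u₀ u₁ : ℝ → ℝ → ℝ) (x t : ℝ) :
    Qblock u₀ u₁ x t
      = -(1 / 2 : ℂ) • dualMat (deriv (fun x' => u₀ x' t) x) (deriv (fun x' => u₁ x' t) x) :=
  rfl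

theorem Sblock_eq (u₀ u₁ : ℝ → ℝ → ℝ) (x t : ℝ) :
    Sblock u₀ u₁ x t = dualMat (sin (u₀ x t)) (u₁ x t * cos (u₀ x t)) :=
  rfl

theorem entrywiseDeriv_Qblock (u₀ u₁ : ℝ → ℝ → ℝ) (x t : ℝ) :
    entrywiseDeriv (Qblock u₀ u₁ x) t
      = -(1 / 2 : ℂ) • dualMat (deriv (fun t' => deriv (fun x' => u₀ x' t') x) t)
          (deriv (fun t' => deriv (fun x' => u₁ x' t') x) t) := by
  change entrywiseDeriv (fun t' => -(1 / 2 : ℂ) • dualMat _ _) t = _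
  rw [entrywiseDeriv_const_smul, entrywiseDeriv_dualMat]

section Slices

variable {u₀ u₁ : ℝ → ℝ → ℝ} {x t : ℝ}

theorem entrywiseDeriv_Cblock (h₀ : DifferentiableAt ℝ (fun x' => u₀ x' t) x)
    (h₁ : DifferentiableAt ℝ (fun x' => u₁ x' t) x) :
    entrywiseDeriv (fun x' => Cblock u₀ u₁ x' t) x
      = -(Sblock u₀ u₁ x t
          * dualMat (deriv (fun x' => u₀ x' t) x) (deriv (fun x' => u₁ x' t) x)) :=
  entrywiseDeriv_dualCos h₀ h₁

theorem entrywiseDeriv_Sblock (h₀ : DifferentiableAt ℝ (fun x' => u₀ x' t) x)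
    (h₁ : DifferentiableAt ℝ (fun x' => u₁ x' t) x) :
    entrywiseDeriv (fun x' => Sblock u₀ u₁ x' t) x
      = Cblock u₀ u₁ x t
          * dualMat (deriv (fun x' => u₀ x' t) x) (deriv (fun x' => u₁ x' t) x) :=
  entrywiseDeriv_dualSin h₀ h₁

end Slices

theorem zeroCurvature_fromBlocks {n K : Type*} [Fintype n] [DecidableEq n] [Field K] [CharZero K]
    (μ k : K) (hkμ : k * μ = -1 / 4) (Φ U C S : Matrix n n K)
    (hC : Commute U C) (hS : Commute U S) :
    fromBlocks 0 (-((1 / 2 : K) • Φ)) ((1 / 2 : K) • Φ) 0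
        - k • fromBlocks (-(S * U)) (C * U) (C * U) (S * U)
        + fromBlocks (-(μ • 1)) (-((1 / 2 : K) • U)) ((1 / 2 : K) • U) (μ • 1)
          * (k • fromBlocks C S S (-C))
        - (k • fromBlocks C S S (-C))
          * fromBlocks (-(μ • 1)) (-((1 / 2 : K) • U)) ((1 / 2 : K) • U) (μ • 1)
      = fromBlocks 0 (-((1 / 2 : K) • (Φ - S))) ((1 / 2 : K) • (Φ - S)) 0 := by
  simp only [fromBlocks_multiply, fromBlocks_smul, fromBlocks_neg, sub_eq_add_neg, fromBlocks_add,
    smul_mul_assoc, mul_smul_comm, one_mul, mul_one, mul_neg, neg_mul, smul_neg]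
  rw [hC.eq, hS.eq]
  congr 1
  · module
  · linear_combination (norm := module) (-2 : K) • hkμ • S
  · linear_combination (norm := module) (2 : K) • hkμ • S
  · module

/-- zero curvature (Lax) formulation of the `Z₂`-Sine-Gordon equation.
With the 4×4 matrices `M = [[−iλ·I₂, Q],[−Q, iλ·I₂]]` and
`N = (i/(4λ))·[[C, S],[S, −C]]`, the zero curvature equation
`∂_t M − ∂_x N + MN − NM = 0` at a point is equivalent to the `Z₂`-Sine-Gordon
equations `∂_t∂_x u₀ = sin u₀` and `∂_t∂_x u₁ = u₁ cos u₀` there. -/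
theorem Z2_sineGordon_zero_curvature (u₀ u₁ : ℝ → ℝ → ℝ)
    (h₀ : ContDiff ℝ (⊤ : ℕ∞) fun p : ℝ × ℝ => u₀ p.1 p.2)
    (h₁ : ContDiff ℝ (⊤ : ℕ∞) fun p : ℝ × ℝ => u₁ p.1 p.2)
    (lam : ℂ) (hlam : lam ≠ 0)
    (M N : ℝ → ℝ → Matrix (Fin 2 ⊕ Fin 2) (Fin 2 ⊕ Fin 2) ℂ)
    (hM : ∀ x t, M x t = Matrix.fromBlocks
        ((-(Complex.I * lam)) • (1 : Matrix (Fin 2) (Fin 2) ℂ)) (Qblock u₀ u₁ x t)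
        (-(Qblock u₀ u₁ x t)) ((Complex.I * lam) • (1 : Matrix (Fin 2) (Fin 2) ℂ)))
    (hN : ∀ x t, N x t = (Complex.I / (4 * lam)) • Matrix.fromBlocks
        (Cblock u₀ u₁ x t) (Sblock u₀ u₁ x t)
        (Sblock u₀ u₁ x t) (-(Cblock u₀ u₁ x t)))
    (x t : ℝ) :
    ((Matrix.of fun i j => deriv (fun t' => M x t' i j) t)
        - (Matrix.of fun i j => deriv (fun x' => N x' t i j) x)
        + M x t * N x t - N x t * M x t = 0)
      ↔ (deriv (fun t' => deriv (fun x' => u₀ x' t') x) t = Real.sin (u₀ x t)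
          ∧ deriv (fun t' => deriv (fun x' => u₁ x' t') x) t
              = u₁ x t * Real.cos (u₀ x t)) := by
  have hu₀ := (h₀.differentiable (by simp) (x, t)).slice_fst
  have hu₁ := (h₁.differentiable (by simp) (x, t)).slice_fst
  change entrywiseDeriv (M x) t - entrywiseDeriv (N · t) x + M x t * N x t - N x t * M x t = 0 ↔ _
  rw [hM x t, hN x t, Qblock_eq]
  set U := dualMat (deriv (fun x' => u₀ x' t) x) (deriv (fun x' => u₁ x' t) x)
  set Φ := dualMat (deriv (fun t' => deriv (fun x' => u₀ x' t') x) t)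
    (deriv (fun t' => deriv (fun x' => u₁ x' t') x) t)
  have hMt : entrywiseDeriv (M x) t = fromBlocks 0 (-((1 / 2 : ℂ) • Φ)) ((1 / 2 : ℂ) • Φ) 0 := by
    rw [funext (hM x), entrywiseDeriv_fromBlocks, entrywiseDeriv_neg, entrywiseDeriv_Qblock,
      entrywiseDeriv_const, entrywiseDeriv_const, neg_smul, neg_neg]
  have hNx : entrywiseDeriv (N · t) x = (Complex.I / (4 * lam)) • fromBlocks
      (-(Sblock u₀ u₁ x t * U)) (Cblock u₀ u₁ x t * U) (Cblock u₀ u₁ x t * U)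
      (Sblock u₀ u₁ x t * U) := by
    simp only [hN, entrywiseDeriv_const_smul, entrywiseDeriv_fromBlocks, entrywiseDeriv_neg,
      entrywiseDeriv_Cblock hu₀ hu₁, entrywiseDeriv_Sblock hu₀ hu₁, neg_neg]
    rfl
  have hkμ : Complex.I / (4 * lam) * (Complex.I * lam) = -1 / 4 := by
    field_simp
    simp
  rw [hMt, hNx]
  simp only [neg_smul, neg_neg]
  rw [zeroCurvature_fromBlocks _ _ hkμ Φ U (Cblock u₀ u₁ x t) (Sblock u₀ u₁ x t)
    (dualMat_commute ..) (dualMat_commute ..),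
    ← fromBlocks_zero, fromBlocks_inj, Sblock_eq]
  simp [Φ, dualMat_sub, dualMat_eq_zero_iff, sub_eq_zero]
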